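/- arXiv:1911.08964 — 5 statements merged into one kernel-verified Lean document; each statement's English description precedes it below -/
import Mathlib

section
/- Let G = (V,E) be a graph and V = D ∪ P ∪ I a nice mds partition of G. Then every minimal vertex cover C of G with C ⊆ D ∪ P satisfies D ⊆ C. Consequently, there exists a minimal vertex cover C with D ⊆ C ⊆ D ∪ P. -/
variable {V : Type*} [Fintype V] [DecidableEq V]

/-- The set of endpoints of an edge set `M`, i.e. `V(M)`. -/
def mVerts (M : Finset (Sym2 V)) : Finset V :=
  Finset.univ.filter fun v => ∃ e ∈ M, v ∈ e

/-- `D ∪ M` is a mixed dominating set of `G`: every vertex outside `D ∪ V(M)` has a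
neighbor in `D`, and every edge outside `M` has an endpoint in `D ∪ V(M)`. -/
def IsMDS (G : SimpleGraph V) (D : Finset V) (M : Finset (Sym2 V)) : Prop :=
  (∀ e ∈ M, e ∈ G.edgeSet) ∧
  (∀ v : V, v ∉ D → v ∉ mVerts M → ∃ u ∈ D, G.Adj u v) ∧
  (∀ e ∈ G.edgeSet, e ∉ M → ∃ v, v ∈ e ∧ (v ∈ D ∨ v ∈ mVerts M))

/-- `v` is a private neighbor of `u ∈ D`: `v ∉ D ∪ V(M)` and `N(v) ∩ D = {u}`. -/
def PrivNbr (G : SimpleGraph V) (D : Finset V) (M : Finset (Sym2 V)) (u v : V) : Prop :=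
  v ∉ D ∧ v ∉ mVerts M ∧ G.Adj u v ∧ ∀ w ∈ D, G.Adj w v → w = u

/-- A nice mixed dominating set: additionally `D ∩ V(M) = ∅` and every `u ∈ D` has
at least two private neighbors. -/
def IsNiceMDS (G : SimpleGraph V) (D : Finset V) (M : Finset (Sym2 V)) : Prop :=
  IsMDS G D M ∧ Disjoint D (mVerts M) ∧
    ∀ u ∈ D, ∃ v₁ v₂, v₁ ≠ v₂ ∧ PrivNbr G D M u v₁ ∧ PrivNbr G D M u v₂

/-- `C` is a vertex cover of `G`. -/
def IsVC (G : SimpleGraph V) (C : Finset V) : Prop :=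
  ∀ ⦃v w : V⦄, G.Adj v w → v ∈ C ∨ w ∈ C

theorem mem_mVerts_of_mem {M : Finset (Sym2 V)} {e : Sym2 V} {v : V} (he : e ∈ M)
    (hv : v ∈ e) : v ∈ mVerts M :=
  Finset.mem_filter.mpr ⟨Finset.mem_univ v, e, he, hv⟩

theorem IsMDS.isVC_union {G : SimpleGraph V} {D : Finset V} {M : Finset (Sym2 V)}
    (h : IsMDS G D M) : IsVC G (D ∪ mVerts M) := by
  intro v w hvw
  by_cases hM : s(v, w) ∈ M
  · exact Or.inl (Finset.mem_union_right D (mem_mVerts_of_mem hM (Sym2.mem_mk_left v w)))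
  · obtain ⟨x, hx, hxDM⟩ := h.2.2 s(v, w) hvw hM
    rcases Sym2.mem_iff.mp hx with rfl | rfl
    · exact Or.inl (Finset.mem_union.mpr hxDM)
    · exact Or.inr (Finset.mem_union.mpr hxDM)

/-- A private neighbour of `u` lies outside `D ∪ V(M)`, so a cover inside `D ∪ V(M)` must
take `u` to cover the edge between them. -/
theorem IsNiceMDS.subset_of_isVC {G : SimpleGraph V} {D C : Finset V} {M : Finset (Sym2 V)}
    (h : IsNiceMDS G D M) (hC : IsVC G C) (hCsub : C ⊆ D ∪ mVerts M) : D ⊆ C := by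
  intro u hu
  obtain ⟨v, -, -, ⟨hvD, hvM, huv, -⟩, -⟩ := h.2.2 u hu
  refine (hC huv).resolve_right fun hvC => ?_
  rcases Finset.mem_union.mp (hCsub hvC) with hv | hv
  exacts [hvD hv, hvM hv]

theorem IsVC.exists_minimal_subset {W : Type*} {G : SimpleGraph W} {S : Finset W}
    (hS : IsVC G S) : ∃ C ⊆ S, IsVC G C ∧ ∀ C' ⊂ C, ¬ IsVC G C' := by
  obtain ⟨C, hCS, hC⟩ := exists_minimal_le_of_wellFoundedLT (IsVC G) S hS
  exact ⟨C, hCS, hC.prop, fun _ hC' => hC.not_prop_of_lt hC'⟩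

/-- For a nice mds partition `V = D ∪ P ∪ I`: every minimal vertex cover `C` of `G`
with `C ⊆ D ∪ P` satisfies `D ⊆ C`; consequently there is a minimal vertex cover `C`
with `D ⊆ C ⊆ D ∪ P`. -/
theorem stmt4 (G : SimpleGraph V) (D : Finset V) (M : Finset (Sym2 V))
    (h : IsNiceMDS G D M) :
    (∀ C : Finset V, IsVC G C → (∀ C' ⊂ C, ¬ IsVC G C') → C ⊆ D ∪ mVerts M → D ⊆ C) ∧
    (∃ C : Finset V, IsVC G C ∧ (∀ C' ⊂ C, ¬ IsVC G C') ∧ D ⊆ C ∧ C ⊆ D ∪ mVerts M) := by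
  refine ⟨fun C hC _ hCsub => h.subset_of_isVC hC hCsub, ?_⟩
  obtain ⟨C, hCsub, hC, hCmin⟩ := h.1.isVC_union.exists_minimal_subset
  exact ⟨C, hC, hCmin, h.subset_of_isVC hC hCsub, hCsub⟩
end

section
/- Let G be a graph without isolated vertices, with a mixed dominating set D ∪ M satisfying D ∩ V(M) = ∅. If some u ∈ D has no private neighbor and has a neighbor v ∉ D, then D \ {u} together with M ∪ {(u,v)} is a mixed dominating set of G of size at most |D| + |M|. -/
variable {V : Type*} [Fintype V] [DecidableEq V]

/-! Every vertex that `u` dominates has, not being a private neighbor of `u`, another neighbor in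
`D`, so `D \ {u}` still dominates it; `u` itself and every edge at `u` are covered by the new
edge `uv`. Trading `u` for `uv` does not increase the size. -/

theorem mem_mVerts {M : Finset (Sym2 V)} {w : V} : w ∈ mVerts M ↔ ∃ e ∈ M, w ∈ e := by
  simp [mVerts]

theorem mem_mVerts_insert {M : Finset (Sym2 V)} {e : Sym2 V} {w : V} :
    w ∈ mVerts (insert e M) ↔ w ∈ e ∨ w ∈ mVerts M := by
  simp only [mem_mVerts, Finset.exists_mem_insert]

theorem Finset.card_erase_add_card_insert_le {α β : Type*} [DecidableEq α] [DecidableEq β]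
    {s : Finset α} {a : α} (ha : a ∈ s) (t : Finset β) (b : β) :
    (s.erase a).card + (insert b t).card ≤ s.card + t.card := by
  have := Finset.card_erase_add_one ha
  have := Finset.card_insert_le b t
  omega

theorem exists_adj_erase_of_not_privNbr {G : SimpleGraph V} {D : Finset V} {M : Finset (Sym2 V)}
    (hdom : ∀ w, w ∉ D → w ∉ mVerts M → ∃ x ∈ D, G.Adj x w) {u : V}
    (hnop : ∀ w, ¬ PrivNbr G D M u w) {w : V} (hwD : w ∉ D) (hwM : w ∉ mVerts M) :
    ∃ x ∈ D.erase u, G.Adj x w := by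
  obtain ⟨x, hxD, hxw⟩ := hdom w hwD hwM
  by_cases hxu : x = u
  · subst hxu
    obtain ⟨y, hyD, hyw, hyx⟩ : ∃ y ∈ D, G.Adj y w ∧ y ≠ x := by
      by_contra! hall
      exact hnop w ⟨hwD, hwM, hxw, hall⟩
    exact ⟨y, Finset.mem_erase.mpr ⟨hyx, hyD⟩, hyw⟩
  · exact ⟨x, Finset.mem_erase.mpr ⟨hxu, hxD⟩, hxw⟩

theorem IsMDS.erase_insert {G : SimpleGraph V} {D : Finset V} {M : Finset (Sym2 V)}
    (h : IsMDS G D M) {u v : V} (hnop : ∀ w, ¬ PrivNbr G D M u w) (hadj : G.Adj u v) :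
    IsMDS G (D.erase u) (insert s(u, v) M) := by
  obtain ⟨hMG, hdom, hcov⟩ := h
  refine ⟨?_, ?_, ?_⟩
  · intro e he
    rcases Finset.mem_insert.mp he with rfl | he
    · exact hadj
    · exact hMG e he
  · intro w hwD hwM
    rw [mem_mVerts_insert, not_or] at hwM
    have hwu : w ≠ u := by rintro rfl; exact hwM.1 (Sym2.mem_mk_left w v)
    exact exists_adj_erase_of_not_privNbr hdom hnop
      (fun hw => hwD (Finset.mem_erase.mpr ⟨hwu, hw⟩)) hwM.2
  · intro e he heM
    obtain ⟨x, hxe, hx⟩ := hcov e he fun h => heM (Finset.mem_insert_of_mem h)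
    refine ⟨x, hxe, ?_⟩
    rw [mem_mVerts_insert]
    by_cases hxu : x = u
    · exact Or.inr (Or.inl (hxu ▸ Sym2.mem_mk_left u v))
    · exact hx.imp (fun hxD => Finset.mem_erase.mpr ⟨hxu, hxD⟩) Or.inr

theorem stmt7_general (G : SimpleGraph V)
    (D : Finset V) (M : Finset (Sym2 V))
    (h : IsMDS G D M) (u : V) (hu : u ∈ D)
    (hnop : ∀ w, ¬ PrivNbr G D M u w) (v : V) (hadj : G.Adj u v) :
    IsMDS G (D.erase u) (insert s(u, v) M) ∧
    (D.erase u).card + (insert s(u, v) M).card ≤ D.card + M.card :=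
  ⟨h.erase_insert hnop hadj, Finset.card_erase_add_card_insert_le hu M s(u, v)⟩

/-- If `G` has no isolated vertices, `D ∪ M` is a mixed dominating set with
`D ∩ V(M) = ∅`, and `u ∈ D` has no private neighbor but has a neighbor `v ∉ D`,
then `D \\ {u}` with `M ∪ {(u,v)}` is a mixed dominating set of size at most `|D| + |M|`. -/
theorem stmt7 (G : SimpleGraph V) (hiso : ∀ x : V, ∃ y, G.Adj x y)
    (D : Finset V) (M : Finset (Sym2 V))
    (h : IsMDS G D M) (hdisj : Disjoint D (mVerts M)) (u : V) (hu : u ∈ D)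
    (hnop : ∀ w, ¬ PrivNbr G D M u w) (v : V) (hadj : G.Adj u v) (hvD : v ∉ D) :
    IsMDS G (D.erase u) (insert s(u, v) M) ∧
    (D.erase u).card + (insert s(u, v) M).card ≤ D.card + M.card :=
  stmt7_general G D M h u hu hnop v hadj
end

section
/- Let G be a graph without isolated vertices, with a mixed dominating set D ∪ M such that D ∩ V(M) = ∅, and suppose u ∈ D has no private neighbor and N(u) ⊆ D. Then (D \ {u}) ∪ M is a mixed dominating set of G of strictly smaller size. -/
variable {V : Type*} [Fintype V] [DecidableEq V]

/-! Since `N(u) ⊆ D` and `u` is not isolated, every vertex or edge that `u` dominates, `u`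
included, has a neighbor of `u` in `D \ {u}` that dominates it instead. -/

theorem IsMDS.erase_of_forall_adj_mem {G : SimpleGraph V} {D : Finset V}
    {M : Finset (Sym2 V)} (h : IsMDS G D M) {u : V} (hnbr : ∃ y, G.Adj u y)
    (hN : ∀ w, G.Adj u w → w ∈ D) : IsMDS G (D.erase u) M := by
  have mem_erase_of_adj {w : V} (huw : G.Adj u w) : w ∈ D.erase u :=
    Finset.mem_erase.2 ⟨huw.ne', hN w huw⟩
  obtain ⟨hM, hvert, hedge⟩ := h
  refine ⟨hM, fun v hv hvM => ?_, fun e he heM => ?_⟩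
  · by_cases hvu : v = u
    · obtain ⟨y, huy⟩ := hnbr
      exact ⟨y, mem_erase_of_adj huy, hvu ▸ huy.symm⟩
    · have hvD : v ∉ D := fun hvD => hv (Finset.mem_erase.2 ⟨hvu, hvD⟩)
      obtain ⟨w, hwD, hwv⟩ := hvert v hvD hvM
      have hwu : w ≠ u := by
        rintro rfl
        exact hvD (hN v hwv)
      exact ⟨w, Finset.mem_erase.2 ⟨hwu, hwD⟩, hwv⟩
  · obtain ⟨v, hve, hvD | hvM⟩ := hedge e he heM
    · by_cases hvu : v = u
      · subst hvu
        have hadj : G.Adj v (Sym2.Mem.other hve) := by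
          rwa [← SimpleGraph.mem_edgeSet, Sym2.other_spec]
        exact ⟨Sym2.Mem.other hve, Sym2.other_mem hve, Or.inl (mem_erase_of_adj hadj)⟩
      · exact ⟨v, hve, Or.inl (Finset.mem_erase.2 ⟨hvu, hvD⟩)⟩
    · exact ⟨v, hve, Or.inr hvM⟩

theorem stmt8_general (G : SimpleGraph V) (hiso : ∀ x : V, ∃ y, G.Adj x y)
    (D : Finset V) (M : Finset (Sym2 V))
    (h : IsMDS G D M) (u : V) (hu : u ∈ D)
    (hN : ∀ w, G.Adj u w → w ∈ D) :
    IsMDS G (D.erase u) M ∧ (D.erase u).card + M.card < D.card + M.card :=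
  ⟨h.erase_of_forall_adj_mem (hiso u) hN,
    Nat.add_lt_add_right (Finset.card_erase_lt_of_mem hu) _⟩

/-- If `G` has no isolated vertices, `D ∪ M` is a mixed dominating set with
`D ∩ V(M) = ∅`, and `u ∈ D` has no private neighbor and `N(u) ⊆ D`, then
`(D \\ {u}) ∪ M` is a mixed dominating set of strictly smaller size. -/
theorem stmt8 (G : SimpleGraph V) (hiso : ∀ x : V, ∃ y, G.Adj x y)
    (D : Finset V) (M : Finset (Sym2 V))
    (h : IsMDS G D M) (hdisj : Disjoint D (mVerts M)) (u : V) (hu : u ∈ D)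
    (hnop : ∀ w, ¬ PrivNbr G D M u w) (hN : ∀ w, G.Adj u w → w ∈ D) :
    IsMDS G (D.erase u) M ∧ (D.erase u).card + M.card < D.card + M.card :=
  stmt8_general G hiso D M h u hu hN
end

section
/- Removing all leaves (vertices of degree 1) from a graph can increase the pathwidth by at most 1: if G' is obtained from G by deleting all degree-1 vertices and G' has pathwidth w, then G has pathwidth at most w + 1. -/
/-- `G` has pathwidth at most `w`: there is a path decomposition all of whose bags
have size at most `w + 1`. -/
def pwLE {α : Type*} (G : SimpleGraph α) (w : ℕ) : Prop :=
  ∃ (n : ℕ) (bag : Fin n → Finset α),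
    (∀ v : α, ∃ i, v ∈ bag i) ∧
    (∀ v v' : α, G.Adj v v' → ∃ i, v ∈ bag i ∧ v' ∈ bag i) ∧
    (∀ (v : α) (i j k : Fin n), i ≤ k → k ≤ j → v ∈ bag i → v ∈ bag j → v ∈ bag k) ∧
    (∀ i, (bag i).card ≤ w + 1)

/-!
Every leaf `x` of `G` has a unique neighbour `u`. If `u` is not a leaf, it lies in some bag `Bᵢ`
of the decomposition of the non-leaf part, and right after `Bᵢ` we insert the bag `Bᵢ ∪ {x}`;
distinct leaves get distinct new bags, so bags grow by at most one vertex. If `u` is a leaf too,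
`{x, u}` is a component of `G` and becomes a bag of its own at the end. Each leaf then lies in
exactly one bag, and the bags containing a non-leaf are the copies of its old bags, which are
still consecutive.
-/

open Finset

theorem pwLE_of_linearOrder {α ι : Type*} [Fintype ι] [LinearOrder ι] (G : SimpleGraph α)
    (w : ℕ) (bag : ι → Finset α) (cover : ∀ v, ∃ i, v ∈ bag i)
    (edge : ∀ v v', G.Adj v v' → ∃ i, v ∈ bag i ∧ v' ∈ bag i)
    (interval : ∀ (v : α) (i j k : ι), i ≤ k → k ≤ j → v ∈ bag i → v ∈ bag j → v ∈ bag k)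
    (card_le : ∀ i, #(bag i) ≤ w + 1) : pwLE G w := by
  let e := monoEquivOfFin ι rfl
  refine ⟨Fintype.card ι, bag ∘ e, fun v => ?_, fun v v' hvv' => ?_, ?_, fun i => card_le _⟩
  · obtain ⟨i, hi⟩ := cover v
    exact ⟨e.symm i, by simpa using hi⟩
  · obtain ⟨i, hi, hi'⟩ := edge v v' hvv'
    exact ⟨e.symm i, by simpa using hi, by simpa using hi'⟩
  · intro v i j k hik hkj
    exact interval v (e i) (e j) (e k) (e.monotone hik) (e.monotone hkj)

namespace SimpleGraph

variable {V : Type*} [Fintype V] (G : SimpleGraph V) [DecidableRel G.Adj]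

noncomputable def leafNbr (x : V) : V :=
  if h : G.degree x = 1 then (degree_eq_one_iff_existsUnique_adj.mp h).exists.choose else x

variable {G}

theorem adj_leafNbr {x : V} (hx : G.degree x = 1) : G.Adj x (G.leafNbr x) := by
  rw [leafNbr, dif_pos hx]
  exact (degree_eq_one_iff_existsUnique_adj.mp hx).exists.choose_spec

theorem eq_leafNbr_of_adj {x y : V} (hx : G.degree x = 1) (hxy : G.Adj x y) :
    y = G.leafNbr x :=
  (degree_eq_one_iff_existsUnique_adj.mp hx).unique hxy (adj_leafNbr hx)

theorem leafNbr_leafNbr {x : V} (hx : G.degree x = 1) (hnx : G.degree (G.leafNbr x) = 1) :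
    G.leafNbr (G.leafNbr x) = x :=
  (eq_leafNbr_of_adj hnx (adj_leafNbr hx).symm).symm

end SimpleGraph

open SimpleGraph

section OldBags

variable {V : Type*} [Fintype V] {G : SimpleGraph V} [DecidableRel G.Adj] {n : ℕ}
  (B : Fin n → Finset {v // G.degree v ≠ 1})

noncomputable def oldBag (a : WithTop (Fin n)) : Finset V :=
  (a.recTopCoe ∅ B : Finset {v // G.degree v ≠ 1}).map (Function.Embedding.subtype _)

variable {B}

@[simp] theorem oldBag_top : oldBag B ⊤ = ∅ := by
  simp [oldBag]

theorem mem_oldBag_coe {v : {v // G.degree v ≠ 1}} {i : Fin n} :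
    (v : V) ∈ oldBag B i ↔ v ∈ B i :=
  Finset.mem_map' _

theorem degree_ne_one_of_mem_oldBag {x : V} {a : WithTop (Fin n)} (hx : x ∈ oldBag B a) :
    G.degree x ≠ 1 := by
  obtain ⟨v, -, rfl⟩ := Finset.mem_map.mp hx
  exact v.2

theorem oldBag_interval
    (interval : ∀ (v : {v // G.degree v ≠ 1}) (i j k : Fin n),
      i ≤ k → k ≤ j → v ∈ B i → v ∈ B j → v ∈ B k)
    {v : {v // G.degree v ≠ 1}} {a b c : WithTop (Fin n)} (hac : a ≤ c) (hcb : c ≤ b)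
    (ha : (v : V) ∈ oldBag B a) (hb : (v : V) ∈ oldBag B b) : (v : V) ∈ oldBag B c := by
  induction b using WithTop.recTopCoe with
  | top => simp at hb
  | coe j =>
    obtain ⟨k, rfl⟩ := WithTop.ne_top_iff_exists.mp (ne_top_of_le_ne_top WithTop.coe_ne_top hcb)
    obtain ⟨i, rfl⟩ := WithTop.ne_top_iff_exists.mp (ne_top_of_le_ne_top WithTop.coe_ne_top hac)
    rw [mem_oldBag_coe] at *
    exact interval v i j k (WithTop.coe_le_coe.mp hac) (WithTop.coe_le_coe.mp hcb) ha hb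

end OldBags

section LeafBags

variable {V : Type*} [Fintype V] [LinearOrder V] {G : SimpleGraph V} [DecidableRel G.Adj]
  {n : ℕ} (B : Fin n → Finset {v // G.degree v ≠ 1}) (g : {v // G.degree v ≠ 1} → Fin n)

/-- The new bags are indexed by `WithTop (Fin n) ×ₗ V` in lexicographic order: bag `(i, z)` is
the old bag `i` plus possibly the leaf `z`, and the block `⊤`, which has no old bag, holds each
two-vertex component at the index of its smaller vertex. -/
noncomputable def leafSlot (x : V) : WithTop (Fin n) ×ₗ V :=
  if h : G.degree (G.leafNbr x) = 1 then toLex (⊤, min x (G.leafNbr x))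
  else toLex (g ⟨G.leafNbr x, h⟩, x)

noncomputable def leafBag (k : WithTop (Fin n) ×ₗ V) : Finset V :=
  oldBag B (ofLex k).1 ∪ univ.filter (fun x => G.degree x = 1 ∧ leafSlot g x = k)

variable {B g}

theorem mem_leafBag_of_degree_eq_one {x : V} (hx : G.degree x = 1)
    {k : WithTop (Fin n) ×ₗ V} : x ∈ leafBag B g k ↔ leafSlot g x = k := by
  simp only [leafBag, mem_union, mem_filter, mem_univ, true_and, hx]
  exact or_iff_right fun h => degree_ne_one_of_mem_oldBag h hx

theorem mem_leafBag_coe {v : {v // G.degree v ≠ 1}} {k : WithTop (Fin n) ×ₗ V} :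
    (v : V) ∈ leafBag B g k ↔ (v : V) ∈ oldBag B (ofLex k).1 := by
  simp [leafBag, v.2]

theorem leafSlot_leafNbr {x : V} (hx : G.degree x = 1) (hnx : G.degree (G.leafNbr x) = 1) :
    leafSlot g (G.leafNbr x) = leafSlot g x := by
  rw [leafSlot, leafSlot, dif_pos hnx, leafNbr_leafNbr hx hnx, dif_pos hx, min_comm]

theorem leafSlot_eq_toLex {x z : V} {a : WithTop (Fin n)} (hx : G.degree x = 1)
    (h : leafSlot g x = toLex (a, z)) : x = z ∨ a = ⊤ ∧ x = G.leafNbr z := by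
  unfold leafSlot at h
  split_ifs at h with hnx <;> simp only [toLex_inj, Prod.mk.injEq] at h
  · rcases min_choice x (G.leafNbr x) with hmin | hmin
    · exact .inl (hmin.symm.trans h.2)
    · exact .inr ⟨h.1.symm, by rw [← h.2, hmin, leafNbr_leafNbr hx hnx]⟩
  · exact .inl h.2

theorem leafBag_cover (hg : ∀ v, v ∈ B (g v)) (x : V) : ∃ k, x ∈ leafBag B g k := by
  by_cases hx : G.degree x = 1
  · exact ⟨leafSlot g x, (mem_leafBag_of_degree_eq_one hx).mpr rfl⟩
  · exact ⟨toLex (g ⟨x, hx⟩, x), mem_leafBag_coe (v := ⟨x, hx⟩) |>.mpr (mem_oldBag_coe.mpr (hg _))⟩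

theorem exists_mem_leafBag_leafNbr (hg : ∀ v, v ∈ B (g v)) {x : V} (hx : G.degree x = 1) :
    ∃ k, x ∈ leafBag B g k ∧ G.leafNbr x ∈ leafBag B g k := by
  refine ⟨leafSlot g x, (mem_leafBag_of_degree_eq_one hx).mpr rfl, ?_⟩
  by_cases hnx : G.degree (G.leafNbr x) = 1
  · exact (mem_leafBag_of_degree_eq_one hnx).mpr (leafSlot_leafNbr hx hnx)
  · rw [leafSlot, dif_neg hnx]
    exact mem_leafBag_coe (v := ⟨_, hnx⟩) |>.mpr (mem_oldBag_coe.mpr (hg _))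

theorem leafBag_edge (hg : ∀ v, v ∈ B (g v))
    (edge : ∀ v v' : {v // G.degree v ≠ 1}, G.Adj v v' → ∃ i, v ∈ B i ∧ v' ∈ B i)
    {x y : V} (hxy : G.Adj x y) : ∃ k, x ∈ leafBag B g k ∧ y ∈ leafBag B g k := by
  by_cases hx : G.degree x = 1
  · obtain rfl := eq_leafNbr_of_adj hx hxy
    exact exists_mem_leafBag_leafNbr hg hx
  by_cases hy : G.degree y = 1
  · obtain rfl := eq_leafNbr_of_adj hy hxy.symm
    obtain ⟨k, hk⟩ := exists_mem_leafBag_leafNbr hg hy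
    exact ⟨k, hk.symm⟩
  obtain ⟨i, hi, hi'⟩ := edge ⟨x, hx⟩ ⟨y, hy⟩ hxy
  exact ⟨toLex (i, x), mem_leafBag_coe (v := ⟨x, hx⟩) |>.mpr (mem_oldBag_coe.mpr hi),
    mem_leafBag_coe (v := ⟨y, hy⟩) |>.mpr (mem_oldBag_coe.mpr hi')⟩

theorem leafBag_interval
    (interval : ∀ (v : {v // G.degree v ≠ 1}) (i j k : Fin n),
      i ≤ k → k ≤ j → v ∈ B i → v ∈ B j → v ∈ B k)
    (x : V) (i j k : WithTop (Fin n) ×ₗ V) (hik : i ≤ k) (hkj : k ≤ j)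
    (hi : x ∈ leafBag B g i) (hj : x ∈ leafBag B g j) : x ∈ leafBag B g k := by
  by_cases hx : G.degree x = 1
  · rw [mem_leafBag_of_degree_eq_one hx] at hi hj ⊢
    subst hi hj
    exact le_antisymm hik hkj
  · exact mem_leafBag_coe (v := ⟨x, hx⟩) |>.mpr <| oldBag_interval interval
      (Prod.Lex.monotone_fst _ _ hik) (Prod.Lex.monotone_fst _ _ hkj)
      (mem_leafBag_coe.mp hi) (mem_leafBag_coe.mp hj)

theorem card_leafBag_le {w : ℕ} (card_le : ∀ i, #(B i) ≤ w + 1) (a : WithTop (Fin n)) (z : V) :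
    #(leafBag B g (toLex (a, z))) ≤ w + 1 + 1 := by
  simp only [leafBag, ofLex_toLex]
  refine (card_union_le _ _).trans ?_
  induction a using WithTop.recTopCoe with
  | top =>
    have leaves : univ.filter (fun x => G.degree x = 1 ∧ leafSlot g x = toLex (⊤, z)) ⊆
        {z, G.leafNbr z} := fun x hx => by
      simp only [mem_filter, mem_univ, true_and] at hx
      rcases leafSlot_eq_toLex hx.1 hx.2 with rfl | ⟨-, rfl⟩ <;> simp
    have := (card_le_card leaves).trans card_le_two
    simp only [oldBag_top, card_empty]
    omega
  | coe i =>
    have leaves : univ.filter (fun x => G.degree x = 1 ∧ leafSlot g x = toLex (↑i, z)) ⊆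
        {z} := fun x hx => by
      simp only [mem_filter, mem_univ, true_and] at hx
      rcases leafSlot_eq_toLex hx.1 hx.2 with rfl | ⟨h, -⟩
      · exact mem_singleton_self _
      · exact absurd h WithTop.coe_ne_top
    have := card_le_card leaves
    have : #(oldBag B i) ≤ w + 1 := by simpa [oldBag] using card_le i
    simp only [card_singleton] at *
    omega

end LeafBags

/-- Removing all leaves (degree-1 vertices) from a graph increases pathwidth by at
most one: if the graph induced on non-leaves has pathwidth at most `w`, then `G`
has pathwidth at most `w + 1`. -/
theorem stmt13 {V : Type*} [Fintype V] (G : SimpleGraph V) [DecidableRel G.Adj]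
    (w : ℕ) (h : pwLE (SimpleGraph.induce {v : V | G.degree v ≠ 1} G) w) :
    pwLE G (w + 1) := by
  obtain ⟨n, B, cover, edge, interval, card_le⟩ := h
  choose g hg using cover
  let : LinearOrder V := LinearOrder.lift' _ (Fintype.equivFin V).injective
  exact pwLE_of_linearOrder G (w + 1) (leafBag B g) (leafBag_cover hg)
    (fun _ _ => leafBag_edge hg edge) (leafBag_interval interval)
    (fun k => card_leafBag_le card_le (ofLex k).1 (ofLex k).2)
end

section
/- Let G = (V,E) be a graph with a nice mds partition V = D ∪ P ∪ I arising from nice mixed dominating set D ∪ M. Suppose u ∈ D and u has exactly two neighbors v₁, v₂ outside D ∪ P. If u' ∈ D is a vertex with u' ≠ u, then v₁ and v₂ are not both adjacent to u' — in fact, N(v₁) ∩ D = N(v₂) ∩ D = {u}. -/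
variable {V : Type*} [Fintype V] [DecidableEq V]

theorem and_of_forall_eq_or_eq {α : Type*} {P : α → Prop} {a b x y : α} (hxy : x ≠ y)
    (hx : P x) (hy : P y) (h : ∀ w, P w → w = a ∨ w = b) : P a ∧ P b := by
  rcases h x hx with rfl | rfl <;> rcases h y hy with rfl | rfl
  exacts [absurd rfl hxy, ⟨hx, hy⟩, ⟨hy, hx⟩, absurd rfl hxy]

theorem stmt15_general (G : SimpleGraph V) (D : Finset V) (M : Finset (Sym2 V))
    (h : IsNiceMDS G D M) (u : V) (hu : u ∈ D) (v₁ v₂ : V)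
    (honly : ∀ w : V, G.Adj u w → w ∉ D → w ∉ mVerts M → w = v₁ ∨ w = v₂) :
    ∀ w ∈ D, (G.Adj w v₁ → w = u) ∧ (G.Adj w v₂ → w = u) := by
  obtain ⟨p₁, p₂, hp, hp₁, hp₂⟩ := h.2.2 u hu
  -- The two distinct private neighbours of `u` lie in `N(u) ∩ I ⊆ {v₁, v₂}`, so they are `v₁`, `v₂`.
  have hpriv : PrivNbr G D M u v₁ ∧ PrivNbr G D M u v₂ :=
    and_of_forall_eq_or_eq hp hp₁ hp₂ fun w hw => honly w hw.2.2.1 hw.1 hw.2.1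
  exact fun w hw => ⟨hpriv.1.2.2.2 w hw, hpriv.2.2.2.2 w hw⟩

/-- In a nice mds partition, if `u ∈ D` has exactly two neighbors `v₁, v₂` outside
`D ∪ P`, then `N(v₁) ∩ D = N(v₂) ∩ D = {u}`; in particular no other `u' ∈ D` is
adjacent to both `v₁` and `v₂`. -/
theorem stmt15 (G : SimpleGraph V) (D : Finset V) (M : Finset (Sym2 V))
    (h : IsNiceMDS G D M) (u : V) (hu : u ∈ D) (v₁ v₂ : V) (hne : v₁ ≠ v₂)
    (h1 : G.Adj u v₁) (h2 : G.Adj u v₂)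
    (hv₁ : v₁ ∉ D ∧ v₁ ∉ mVerts M) (hv₂ : v₂ ∉ D ∧ v₂ ∉ mVerts M)
    (honly : ∀ w : V, G.Adj u w → w ∉ D → w ∉ mVerts M → w = v₁ ∨ w = v₂) :
    ∀ w ∈ D, (G.Adj w v₁ → w = u) ∧ (G.Adj w v₂ → w = u) :=
  stmt15_general G D M h u hu v₁ v₂ honly
end
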